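/- For every real k and every complex ρ, the characteristic polynomial of the LM-architecture factors as ρ² + (k−1)ρ − k = (ρ − 1)·(ρ + k), so its roots are exactly 1 and −k. Moreover, this polynomial satisfies the root condition (all complex roots have modulus at most 1, and every root of modulus exactly 1 is simple) if and only if −1 < k ≤ 1. -/

import Mathlib

/-! The polynomial is `(X - 1)(X + k)`. For a product of two linear factors the root condition
says that both roots lie in the closed unit disc and do not coincide on the unit circle; with the
roots `1` and `-k` this means `|k| ≤ 1` and `k ≠ -1`. -/

open Polynomial

noncomputable def lmCharPoly (k : ℝ) : Polynomial ℂ :=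
  X ^ 2 + C ((k : ℂ) - 1) * X - C (k : ℂ)

section RootCondition

variable {K : Type*} [NormedField K]

def RootCondition (p : K[X]) : Prop :=
  (∀ z : K, p.IsRoot z → ‖z‖ ≤ 1) ∧
    ∀ z : K, p.IsRoot z → ‖z‖ = 1 → p.rootMultiplicity z = 1

theorem isRoot_X_sub_C_mul_X_sub_C_iff {a b z : K} :
    ((X - C a) * (X - C b)).IsRoot z ↔ z = a ∨ z = b := by
  simp only [IsRoot, eval_mul, eval_sub, eval_X, eval_C, mul_eq_zero, sub_eq_zero]

theorem rootMultiplicity_X_sub_C_mul_X_sub_C [DecidableEq K] (a b z : K) :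
    ((X - C a) * (X - C b)).rootMultiplicity z =
      (if z = a then 1 else 0) + (if z = b then 1 else 0) := by
  rw [rootMultiplicity_mul (mul_ne_zero (X_sub_C_ne_zero a) (X_sub_C_ne_zero b)),
    rootMultiplicity_X_sub_C, rootMultiplicity_X_sub_C]

theorem rootCondition_X_sub_C_mul_X_sub_C_iff {a b : K} :
    RootCondition ((X - C a) * (X - C b)) ↔
      ‖a‖ ≤ 1 ∧ ‖b‖ ≤ 1 ∧ (‖a‖ = 1 → a ≠ b) := by
  classical
  simp only [RootCondition, isRoot_X_sub_C_mul_X_sub_C_iff, rootMultiplicity_X_sub_C_mul_X_sub_C]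
  constructor
  · rintro ⟨hnorm, hsimple⟩
    refine ⟨hnorm a (.inl rfl), hnorm b (.inr rfl), fun ha hab => ?_⟩
    simpa [← hab] using hsimple a (.inl rfl) ha
  · rintro ⟨ha, hb, hab⟩
    refine ⟨by rintro z (rfl | rfl) <;> assumption, ?_⟩
    rintro z (rfl | rfl) hz
    · simp [hab hz]
    · have hza : z ≠ a := fun h => hab (h ▸ hz) h.symm
      simp [hza]

end RootCondition

theorem lmCharPoly_eq (k : ℝ) : lmCharPoly k = (X - C 1) * (X - C (-(k : ℂ))) := by
  simp only [lmCharPoly, map_neg, map_one, map_sub]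
  ring

theorem lm_charpoly_root_condition (k : ℝ) :
    (∀ ρ : ℂ, ρ ^ 2 + ((k : ℂ) - 1) * ρ - (k : ℂ) = (ρ - 1) * (ρ + (k : ℂ))) ∧
    (∀ z : ℂ, z ^ 2 + ((k : ℂ) - 1) * z - (k : ℂ) = 0 ↔ z = 1 ∨ z = -(k : ℂ)) ∧
    (((∀ z : ℂ, (lmCharPoly k).IsRoot z → ‖z‖ ≤ 1) ∧
        (∀ z : ℂ, (lmCharPoly k).IsRoot z → ‖z‖ = 1 →
          (lmCharPoly k).rootMultiplicity z = 1))
      ↔ (-1 < k ∧ k ≤ 1)) := by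
  have factor (ρ : ℂ) : ρ ^ 2 + ((k : ℂ) - 1) * ρ - (k : ℂ) = (ρ - 1) * (ρ + (k : ℂ)) := by
    ring
  refine ⟨factor, fun z => ?_, ?_⟩
  · rw [factor, mul_eq_zero, sub_eq_zero, add_eq_zero_iff_eq_neg]
  change RootCondition _ ↔ _
  rw [lmCharPoly_eq, rootCondition_X_sub_C_mul_X_sub_C_iff, norm_neg, Complex.norm_real,
    Real.norm_eq_abs, abs_le]
  have hne : (1 : ℂ) ≠ -(k : ℂ) ↔ -1 ≠ k := by
    rw [ne_comm, Ne, neg_eq_iff_eq_neg, ne_comm]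
    exact_mod_cast Iff.rfl
  simp only [norm_one, le_refl, true_and, forall_const, hne, lt_iff_le_and_ne]
  tauto
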